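/- Let 0 < Y < 2 and define J_Y(λ) = √(λ/(2π)) ∫_0^∞ e^{−λh/2} h^{(Y−1)/2} (1+h)^{−Y/2} dh for λ > 0. Then lim_{λ→0⁺} (1 − J_Y(λ))/√λ = √2 · Γ((Y+1)/2)/Γ(Y/2). (The order of convergence of 1 − J_Y(λ) to zero is exactly √λ.) -/

import Mathlib

open MeasureTheory Real Set Filter

/-- `J_Y(λ) = √(λ/(2π)) ∫_0^∞ e^{-λh/2} h^{(Y-1)/2} (1+h)^{-Y/2} dh`. -/
noncomputable def JFun (Y l : ℝ) : ℝ :=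
  Real.sqrt (l / (2 * π)) *
    ∫ h in Ioi (0:ℝ), Real.exp (-(l * h / 2)) * h ^ ((Y-1)/2) * (1+h) ^ (-(Y/2))

open Topology

/-!
Since `√(λ/2π) ∫₀^∞ e^{-λh/2} h^{-1/2} dh = 1`, we get
`(1 - J_Y(λ))/√λ = (2π)^{-1/2} ∫₀^∞ e^{-λh/2} G(h) dh` with `G = kernelGap Y`,
`G(h) = h^{-1/2} (1 - (h/(1+h))^{Y/2}) ≥ 0`. By Bernoulli's inequality
`G(h) ≤ max(1, Y/2) h^{-1/2} (1+h)^{-1}`, so `G` is integrable and dominated convergence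
lets `λ → 0`. Finally `G = F' + Y h^{(Y-1)/2} (1+h)^{-Y/2-1}`, where
`F(h) = 2h G(h)` (`kernelGapPrimitive`) vanishes at `0` and at `∞`, hence
`∫₀^∞ G = Y B((Y+1)/2, 1/2) = 2√π Γ((Y+1)/2)/Γ(Y/2)`.
-/

lemma integrableOn_Ioi_zero_of_norm_le_rpow {f : ℝ → ℝ} {c d : ℝ}
    (hf : AEStronglyMeasurable f (volume.restrict (Ioi 0))) (hc : -1 < c) (hd : d < -1)
    (h_le_one : ∀ x ∈ Ioc (0:ℝ) 1, ‖f x‖ ≤ x ^ c)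
    (h_one_lt : ∀ x ∈ Ioi (1:ℝ), ‖f x‖ ≤ x ^ d) :
    IntegrableOn f (Ioi 0) := by
  rw [← Ioc_union_Ioi_eq_Ioi zero_le_one]
  refine IntegrableOn.union ?_ ?_
  · have hint : IntegrableOn (fun x : ℝ => x ^ c) (Ioc 0 1) := by
      rw [← intervalIntegrable_iff_integrableOn_Ioc_of_le zero_le_one]
      exact intervalIntegral.intervalIntegrable_rpow' hc
    exact hint.mono' (hf.mono_set Ioc_subset_Ioi_self)
      ((ae_restrict_iff' measurableSet_Ioc).mpr (ae_of_all _ h_le_one))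
  · exact (integrableOn_Ioi_rpow_of_lt hd one_pos).mono'
      (hf.mono_set (Ioi_subset_Ioi zero_le_one))
      ((ae_restrict_iff' measurableSet_Ioi).mpr (ae_of_all _ h_one_lt))

lemma integrableOn_rpow_mul_one_add_rpow_neg {a b : ℝ} (ha : 0 < a) (hb : 0 < b) :
    IntegrableOn (fun x : ℝ => x ^ (a - 1) * (1 + x) ^ (-(a + b))) (Ioi 0) := by
  refine integrableOn_Ioi_zero_of_norm_le_rpow (c := a - 1) (d := -b - 1)
    (by fun_prop) (by linarith) (by linarith) (fun x hx => ?_) (fun x hx => ?_)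
  · have hx0 : 0 < x := hx.1
    rw [norm_of_nonneg (by positivity)]
    exact mul_le_of_le_one_right (by positivity)
      (rpow_le_one_of_one_le_of_nonpos (by linarith) (by linarith))
  · have hx0 : 0 < x := zero_lt_one.trans hx
    rw [norm_of_nonneg (by positivity)]
    calc x ^ (a - 1) * (1 + x) ^ (-(a + b)) ≤ x ^ (a - 1) * x ^ (-(a + b)) :=
          mul_le_mul_of_nonneg_left (rpow_le_rpow_of_nonpos hx0 (by linarith) (by linarith))
            (by positivity)
      _ = x ^ (-b - 1) := by rw [← rpow_add hx0]; ring_nf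

lemma div_one_add_le_one {x : ℝ} (hx : 0 ≤ x) : x / (1 + x) ≤ 1 :=
  (div_le_one (by linarith)).mpr (by linarith)

lemma one_sub_div_one_add {x : ℝ} (hx : 1 + x ≠ 0) : 1 - x / (1 + x) = (1 + x)⁻¹ := by
  field_simp
  ring

lemma integral_Ioo_rpow_mul_one_sub_rpow {a b : ℝ} (ha : 0 < a) (hb : 0 < b) :
    ∫ x in Ioo (0:ℝ) 1, x ^ (a - 1) * (1 - x) ^ (b - 1) =
      Gamma a * Gamma b / Gamma (a + b) := by
  have hcomplex : Complex.betaIntegral a b =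
      ((∫ x in Ioo (0:ℝ) 1, x ^ (a - 1) * (1 - x) ^ (b - 1) : ℝ) : ℂ) := by
    rw [Complex.betaIntegral, intervalIntegral.integral_of_le zero_le_one,
      integral_Ioc_eq_integral_Ioo, ← integral_complex_ofReal]
    refine setIntegral_congr_fun measurableSet_Ioo (fun x hx => ?_)
    push_cast
    rw [Complex.ofReal_cpow hx.1.le, Complex.ofReal_cpow (by linarith [hx.2])]
    push_cast
    ring
  have h := Complex.Gamma_mul_Gamma_eq_betaIntegral (s := a) (t := b) (by simpa using ha)
    (by simpa using hb)
  rw [hcomplex, ← Complex.ofReal_add, Complex.Gamma_ofReal, Complex.Gamma_ofReal,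
    Complex.Gamma_ofReal, ← Complex.ofReal_mul, ← Complex.ofReal_mul] at h
  rw [Complex.ofReal_injective h, mul_div_cancel_left₀ _ (Gamma_pos_of_pos (by linarith)).ne']

lemma integral_Ioi_rpow_mul_one_add_rpow_neg {a b : ℝ} (ha : 0 < a) (hb : 0 < b) :
    ∫ x in Ioi (0:ℝ), x ^ (a - 1) * (1 + x) ^ (-(a + b)) =
      Gamma a * Gamma b / Gamma (a + b) := by
  have himage : (fun x : ℝ => x / (1 + x)) '' Ioi 0 = Ioo 0 1 := by
    ext y
    simp only [mem_image, mem_Ioi, mem_Ioo]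
    constructor
    · rintro ⟨x, hx, rfl⟩
      exact ⟨by positivity, (div_lt_one (by linarith)).mpr (by linarith)⟩
    · rintro ⟨hy0, hy1⟩
      refine ⟨y / (1 - y), div_pos hy0 (by linarith), ?_⟩
      field_simp [(by linarith : (1:ℝ) - y ≠ 0)]
      ring
  have hderiv : ∀ x ∈ Ioi (0:ℝ),
      HasDerivWithinAt (fun x : ℝ => x / (1 + x)) ((1 + x) ^ 2)⁻¹ (Ioi 0) x := by
    intro x hx
    have hx1 : 1 + x ≠ 0 := by have : 0 < x := hx; positivity
    refine (((hasDerivAt_id' x).div ((hasDerivAt_id' x).const_add 1) hx1).congr_deriv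
      ?_).hasDerivWithinAt
    field_simp
    ring
  have hinj : InjOn (fun x : ℝ => x / (1 + x)) (Ioi 0) := by
    intro x hx y hy hxy
    have hx1 : 1 + x ≠ 0 := by have : 0 < x := hx; positivity
    have hy1 : 1 + y ≠ 0 := by have : 0 < y := hy; positivity
    rw [div_eq_div_iff hx1 hy1] at hxy
    linarith
  rw [← integral_Ioo_rpow_mul_one_sub_rpow ha hb, ← himage,
    integral_image_eq_integral_abs_deriv_smul measurableSet_Ioi hderiv hinj]
  refine setIntegral_congr_fun measurableSet_Ioi (fun x (hx : 0 < x) => ?_)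
  have hx1 : 0 < 1 + x := by linarith
  have hsplit : (1 + x) ^ (-(a + b)) =
      ((1 + x) ^ 2)⁻¹ * ((1 + x) ^ (a - 1))⁻¹ * ((1 + x) ^ (b - 1))⁻¹ := by
    rw [rpow_neg hx1.le, show a + b = ((2:ℕ):ℝ) + (a - 1) + (b - 1) by push_cast; ring,
      rpow_add hx1, rpow_add hx1, rpow_natCast]
    simp only [mul_inv]
  rw [smul_eq_mul, abs_of_pos (by positivity), one_sub_div_one_add hx1.ne',
    div_rpow hx.le hx1.le, inv_rpow hx1.le, hsplit]
  field_simp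

lemma one_sub_rpow_le_max_mul {t p : ℝ} (ht0 : 0 ≤ t) (ht1 : t ≤ 1) :
    1 - t ^ p ≤ max 1 p * (1 - t) := by
  rcases le_total p 1 with hp1 | hp1
  · nlinarith [self_le_rpow_of_le_one ht0 ht1 hp1, le_max_left 1 p]
  · have hbernoulli := one_add_mul_self_le_rpow_one_add (s := t - 1) (by linarith) hp1
    rw [add_sub_cancel] at hbernoulli
    nlinarith [le_max_right 1 p]

lemma rpow_add_mul_one_add_rpow_neg {x : ℝ} (hx : 0 < x) (c p : ℝ) :
    x ^ (c + p) * (1 + x) ^ (-p) = x ^ c * (x / (1 + x)) ^ p := by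
  rw [div_rpow hx.le (by linarith), rpow_add hx, rpow_neg (by linarith), div_eq_mul_inv]
  ring

noncomputable def kernelGap (Y h : ℝ) : ℝ :=
  h ^ (-(1/2) : ℝ) - h ^ ((Y-1)/2) * (1+h) ^ (-(Y/2))

section kernelGap

variable {Y x : ℝ}

lemma kernelGap_eq (hx : 0 < x) :
    kernelGap Y x = x ^ (-(1/2) : ℝ) * (1 - (x / (1 + x)) ^ (Y/2)) := by
  rw [kernelGap, mul_sub, mul_one, ← rpow_add_mul_one_add_rpow_neg hx]
  ring_nf

lemma kernelGap_nonneg (hY : 0 ≤ Y) (hx : 0 < x) : 0 ≤ kernelGap Y x := by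
  rw [kernelGap_eq hx]
  exact mul_nonneg (by positivity)
    (sub_nonneg.mpr (rpow_le_one (by positivity) (div_one_add_le_one hx.le) (by linarith)))

lemma kernelGap_le (hx : 0 < x) :
    kernelGap Y x ≤ max 1 (Y/2) * (x ^ (-(1/2) : ℝ) * (1 + x)⁻¹) := by
  rw [kernelGap_eq hx, mul_left_comm, ← one_sub_div_one_add (by linarith)]
  exact mul_le_mul_of_nonneg_left
    (one_sub_rpow_le_max_mul (by positivity) (div_one_add_le_one hx.le)) (by positivity)

lemma integrableOn_kernelGap (hY : 0 ≤ Y) : IntegrableOn (kernelGap Y) (Ioi 0) := by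
  have hbound := (integrableOn_rpow_mul_one_add_rpow_neg (a := 1/2) (b := 1/2)
    (by norm_num) (by norm_num)).const_mul (max 1 (Y/2))
  norm_num [rpow_neg_one] at hbound
  refine hbound.mono' (by unfold kernelGap; fun_prop)
    ((ae_restrict_iff' measurableSet_Ioi).mpr (ae_of_all _ fun x (hx : 0 < x) => ?_))
  rw [norm_of_nonneg (kernelGap_nonneg hY hx)]
  exact kernelGap_le hx

noncomputable def kernelGapPrimitive (Y h : ℝ) : ℝ :=
  2 * h ^ (1/2 : ℝ) - 2 * (h ^ ((Y+1)/2) * (1+h) ^ (-(Y/2)))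

lemma kernelGapPrimitive_eq (hx : 0 < x) : kernelGapPrimitive Y x = 2 * x * kernelGap Y x := by
  have h1 : x ^ (1/2 : ℝ) = x * x ^ (-(1/2) : ℝ) := by
    rw [mul_comm, ← rpow_add_one hx.ne']; norm_num
  have h2 : x ^ ((Y+1)/2) = x * x ^ ((Y-1)/2) := by
    rw [mul_comm, ← rpow_add_one hx.ne']; ring_nf
  rw [kernelGapPrimitive, kernelGap, h1, h2]
  ring

lemma hasDerivAt_kernelGapPrimitive (hx : 0 < x) :
    HasDerivAt (kernelGapPrimitive Y)
      (kernelGap Y x - Y * (x ^ ((Y+1)/2 - 1) * (1 + x) ^ (-((Y+1)/2 + 1/2)))) x := by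
  have hx1 : 0 < 1 + x := by linarith
  have hsqrt : HasDerivAt (fun h : ℝ => h ^ (1/2 : ℝ)) (1/2 * x ^ (1/2 - 1 : ℝ)) x :=
    hasDerivAt_rpow_const (Or.inl hx.ne')
  have hpow : HasDerivAt (fun h : ℝ => h ^ ((Y+1)/2)) ((Y+1)/2 * x ^ ((Y+1)/2 - 1)) x :=
    hasDerivAt_rpow_const (Or.inl hx.ne')
  have hshift :
      HasDerivAt (fun h : ℝ => (1 + h) ^ (-(Y/2))) (1 * -(Y/2) * (1 + x) ^ (-(Y/2) - 1)) x :=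
    ((hasDerivAt_id' x).const_add 1).rpow_const (Or.inl hx1.ne')
  refine (((hsqrt.const_mul 2).sub ((hpow.mul hshift).const_mul 2))).congr_deriv ?_
  have h1 : x ^ ((Y+1)/2 - 1) = x ^ ((Y-1)/2) := by ring_nf
  have h2 : x ^ ((Y+1)/2) = x ^ ((Y-1)/2) * x := by
    rw [← rpow_add_one hx.ne']; ring_nf
  have h3 : (1 + x) ^ (-(Y/2)) = (1 + x) ^ (-(Y/2) - 1) * (1 + x) := by
    rw [← rpow_add_one hx1.ne', sub_add_cancel]
  rw [kernelGap, show -((Y+1)/2 + 1/2) = -(Y/2) - 1 by ring, h1, h2, h3]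
  norm_num
  ring

lemma continuousWithinAt_kernelGapPrimitive_zero (hY : -1 < Y) :
    ContinuousWithinAt (kernelGapPrimitive Y) (Ici 0) 0 := by
  have hshift : ContinuousAt (fun h : ℝ => (1 + h) ^ (-(Y/2))) 0 :=
    (continuousAt_const.add continuousAt_id).rpow_const (Or.inl (by norm_num))
  refine ContinuousAt.continuousWithinAt ?_
  unfold kernelGapPrimitive
  refine (continuousAt_const.mul (continuousAt_id.rpow_const (Or.inr (by norm_num)))).sub
    (continuousAt_const.mul ((continuousAt_id.rpow_const (Or.inr (by linarith))).mul hshift))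

lemma kernelGapPrimitive_zero (hY : -1 < Y) : kernelGapPrimitive Y 0 = 0 := by
  rw [kernelGapPrimitive, zero_rpow (by norm_num), zero_rpow (by linarith)]
  ring

lemma tendsto_kernelGapPrimitive_atTop (hY : 0 ≤ Y) :
    Tendsto (kernelGapPrimitive Y) atTop (𝓝 0) := by
  have hdecay : Tendsto (fun x : ℝ => 2 * max 1 (Y/2) * x ^ (-(1/2) : ℝ)) atTop (𝓝 0) := by
    simpa using (tendsto_rpow_neg_atTop (by norm_num : (0:ℝ) < 1/2)).const_mul (2 * max 1 (Y/2))
  refine tendsto_of_tendsto_of_tendsto_of_le_of_le' tendsto_const_nhds hdecay ?_ ?_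
  all_goals filter_upwards [eventually_gt_atTop 0] with x hx
  · rw [kernelGapPrimitive_eq hx]
    exact mul_nonneg (by positivity) (kernelGap_nonneg hY hx)
  · calc kernelGapPrimitive Y x = 2 * x * kernelGap Y x := kernelGapPrimitive_eq hx
      _ ≤ 2 * x * (max 1 (Y/2) * (x ^ (-(1/2) : ℝ) * (1 + x)⁻¹)) :=
          mul_le_mul_of_nonneg_left (kernelGap_le hx) (by positivity)
      _ = 2 * max 1 (Y/2) * x ^ (-(1/2) : ℝ) * (x / (1 + x)) := by ring
      _ ≤ 2 * max 1 (Y/2) * x ^ (-(1/2) : ℝ) :=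
          mul_le_of_le_one_right (by positivity) (div_one_add_le_one hx.le)

lemma integral_kernelGap (hY : 0 < Y) :
    ∫ x in Ioi (0:ℝ), kernelGap Y x = 2 * √π * Gamma ((Y+1)/2) / Gamma (Y/2) := by
  have hbeta := integrableOn_rpow_mul_one_add_rpow_neg (a := (Y+1)/2) (b := 1/2)
    (by linarith) (by norm_num)
  have hparts := integral_Ioi_of_hasDerivAt_of_tendsto
    (continuousWithinAt_kernelGapPrimitive_zero (by linarith))
    (fun x (hx : 0 < x) => hasDerivAt_kernelGapPrimitive hx)
    ((integrableOn_kernelGap hY.le).sub (hbeta.const_mul Y))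
    (tendsto_kernelGapPrimitive_atTop hY.le)
  rw [integral_sub (integrableOn_kernelGap hY.le) (hbeta.const_mul Y), integral_const_mul,
    integral_Ioi_rpow_mul_one_add_rpow_neg (by linarith) (by norm_num),
    kernelGapPrimitive_zero (by linarith), sub_zero, sub_eq_zero] at hparts
  rw [hparts, show (Y+1)/2 + 1/2 = Y/2 + 1 by ring, Gamma_add_one (by positivity),
    Gamma_one_half_eq]
  field_simp

end kernelGap

lemma integral_exp_neg_mul_rpow_neg_one_half {l : ℝ} (hl : 0 < l) :
    ∫ h in Ioi (0:ℝ), exp (-(l * h / 2)) * h ^ (-(1/2) : ℝ) = √(2 * π / l) := by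
  have hgamma :=
    integral_rpow_mul_exp_neg_mul_Ioi (a := 1/2) (r := l/2) (by norm_num) (by positivity)
  rw [Gamma_one_half_eq, ← sqrt_eq_rpow, ← sqrt_mul (by positivity)] at hgamma
  convert hgamma using 2
  · ext h
    ring_nf
  · field_simp

lemma integrableOn_exp_neg_mul_rpow_neg_one_half {l : ℝ} (hl : 0 < l) :
    IntegrableOn (fun h : ℝ => exp (-(l * h / 2)) * h ^ (-(1/2) : ℝ)) (Ioi 0) := by
  have h := integrableOn_rpow_mul_exp_neg_mul_rpow (s := -(1/2)) (p := 1) (b := l/2)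
    (by norm_num) one_pos (by positivity)
  convert h using 2 with x
  rw [rpow_one]
  ring_nf

lemma exp_neg_mul_div_two_le_one {l h : ℝ} (hl : 0 ≤ l) (hh : 0 ≤ h) :
    exp (-(l * h / 2)) ≤ 1 :=
  exp_le_one_iff.mpr (by have := mul_nonneg hl hh; linarith)

lemma MeasureTheory.IntegrableOn.exp_neg_mul {f : ℝ → ℝ} (hf : IntegrableOn f (Ioi 0)) {l : ℝ}
    (hl : 0 ≤ l) : IntegrableOn (fun h => exp (-(l * h / 2)) * f h) (Ioi 0) := by
  refine hf.bdd_mul (c := 1) (by fun_prop) ((ae_restrict_iff' measurableSet_Ioi).mpr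
    (ae_of_all _ fun h (hh : 0 < h) => ?_))
  rw [norm_of_nonneg (exp_pos _).le]
  exact exp_neg_mul_div_two_le_one hl hh.le

lemma tendsto_integral_exp_neg_mul {f : ℝ → ℝ} (hf : IntegrableOn f (Ioi 0)) :
    Tendsto (fun l => ∫ h in Ioi (0:ℝ), exp (-(l * h / 2)) * f h) (𝓝[>] 0)
      (𝓝 (∫ h in Ioi (0:ℝ), f h)) := by
  refine tendsto_integral_filter_of_dominated_convergence (fun h => ‖f h‖)
    (eventually_nhdsWithin_of_forall fun l (hl : 0 < l) =>
      (hf.exp_neg_mul hl.le).aestronglyMeasurable)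
    (eventually_nhdsWithin_of_forall fun l (hl : 0 < l) => ?_) hf.norm
    (ae_of_all _ fun h => ?_)
  · refine (ae_restrict_iff' measurableSet_Ioi).mpr (ae_of_all _ fun h (hh : 0 < h) => ?_)
    rw [norm_mul, norm_of_nonneg (exp_pos _).le]
    exact mul_le_of_le_one_left (norm_nonneg _) (exp_neg_mul_div_two_le_one hl.le hh.le)
  · have hcont : Continuous fun l : ℝ => exp (-(l * h / 2)) * f h := by fun_prop
    simpa using (hcont.tendsto 0).mono_left nhdsWithin_le_nhds

lemma one_sub_JFun_div_sqrt {Y l : ℝ} (hY : 0 ≤ Y) (hl : 0 < l) :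
    (1 - JFun Y l) / √l =
      (∫ h in Ioi (0:ℝ), exp (-(l * h / 2)) * kernelGap Y h) / √(2 * π) := by
  have hsplit : ∫ h in Ioi (0:ℝ), exp (-(l * h / 2)) * h ^ ((Y-1)/2) * (1+h) ^ (-(Y/2))
      = √(2 * π / l) - ∫ h in Ioi (0:ℝ), exp (-(l * h / 2)) * kernelGap Y h := by
    rw [← integral_exp_neg_mul_rpow_neg_one_half hl,
      ← integral_sub (integrableOn_exp_neg_mul_rpow_neg_one_half hl)
        ((integrableOn_kernelGap hY).exp_neg_mul hl.le)]
    refine setIntegral_congr_fun measurableSet_Ioi fun h _ => ?_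
    rw [kernelGap]
    ring
  have hnorm : √(l / (2 * π)) * √(2 * π / l) = 1 := by
    rw [← sqrt_mul (by positivity), div_mul_div_cancel₀ (by positivity), div_self hl.ne',
      sqrt_one]
  rw [JFun, hsplit, mul_sub, hnorm, sub_sub_cancel, sqrt_div hl.le]
  field_simp

theorem one_sub_JFun_order (Y : ℝ) (hY0 : 0 < Y) :
    Tendsto (fun l => (1 - JFun Y l) / Real.sqrt l) (nhdsWithin 0 (Ioi 0))
      (nhds (Real.sqrt 2 * Real.Gamma ((Y+1)/2) / Real.Gamma (Y/2))) := by
  have hvalue : 2 * √π * Gamma ((Y+1)/2) / Gamma (Y/2) / √(2 * π)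
      = √2 * Gamma ((Y+1)/2) / Gamma (Y/2) := by
    have hpi : 0 < √π := sqrt_pos.mpr pi_pos
    rw [sqrt_mul zero_le_two]
    field_simp
    rw [sq_sqrt zero_le_two]
  have hlimit :=
    (tendsto_integral_exp_neg_mul (integrableOn_kernelGap hY0.le)).div_const √(2 * π)
  rw [integral_kernelGap hY0, hvalue] at hlimit
  refine hlimit.congr' (eventually_nhdsWithin_of_forall fun l (hl : 0 < l) => ?_)
  exact (one_sub_JFun_div_sqrt hY0.le hl).symm
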